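/- For every n ≥ 2 and all i, j with 1 ≤ i, j ≤ n, the two-sided Eulerian numbers satisfy the four-term recurrence: n·A_{n,i,j} = (ij+n-1)·A_{n-1,i,j} + (1-n+j(n+1-i))·A_{n-1,i-1,j} + (1-n+i(n+1-j))·A_{n-1,i,j-1} + (n-1+(n+1-i)(n+1-j))·A_{n-1,i-1,j-1}, where A_{n-1,a,b} is interpreted as 0 when a or b lies outside {1,...,n-1}. -/

import Mathlib

/-!
For an array `a`, let `Tₙ a (x, y) = ∑_{i,j ≤ n} a i j C(x+n-i, n) C(y+n-j, n)`. The two-sided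
Worpitzky identity of Carlitz, Roselle and Scoville, `Tₙ Aₙ (x, y) = C(xy+n-1, n)`, counts the
monotone maps `Fin n → [x] ×ₗ [y]` in two ways. Stably sorting such a map by its second coordinate
yields a permutation `w` together with maps into `[x]` and `[y]` compatible with `w⁻¹` and `w`, and
there are `C(x+n-1-des w, n)` maps compatible with `w`: adding to each value the number of ascents
of `w` below its position makes the map strictly monotone.

As `(xy+n-1) C(xy+n-2, n-1) = n C(xy+n-1, n)`, it remains to see that the right-hand side `R` of
the recurrence, as an operator on arrays, satisfies `Tₙ (R a) = (xy+n-1) Tₙ₋₁ a`. Now `R` is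
`(n-1) Δ⊗Δ + M⊗M` with `Δa(i) = a(i) - a(i-1)` and `Ma(i) = i a(i) + (n+1-i) a(i-1)`, and
summation by parts turns `Δ` and `M` into the identities
`C(x+n-i, n) - C(x+n-i-1, n) = C(x+n-1-i, n-1)` and
`i C(x+n-i, n) + (n-i) C(x+n-i-1, n) = x C(x+n-1-i, n-1)`. Finally `Tₙ a` determines `a`, since
`C(x+n-i, n)` vanishes at `x < i` and equals `1` at `x = i`.
-/

/-- The descent number of a permutation of `Fin n`. -/
def des {n : ℕ} (w : Equiv.Perm (Fin n)) : ℕ :=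
  (Finset.univ.filter fun r : Fin n =>
    ∃ s : Fin n, (s : ℕ) = (r : ℕ) + 1 ∧ w s < w r).card

/-- The two-sided Eulerian number `A_{n,i,j}`: the number of permutations `w`
of `Fin n` with `des w⁻¹ = i - 1` and `des w = j - 1`, interpreted as `0`
when `i` or `j` lies outside `{1, …, n}`. -/
def twoSidedEulerianNum (n i j : ℕ) : ℕ :=
  if 1 ≤ i ∧ i ≤ n ∧ 1 ≤ j ∧ j ≤ n then
    (Finset.univ.filter fun w : Equiv.Perm (Fin n) =>
      des w⁻¹ = i - 1 ∧ des w = j - 1).card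
  else 0

open Finset

section Counting

variable {α : Type*} {n : ℕ}

theorem forall_adjacent_iff {m : ℕ} {P : Fin (m + 1) → Fin (m + 1) → Prop} :
    (∀ r s : Fin (m + 1), (s : ℕ) = r + 1 → P r s) ↔ ∀ i : Fin m, P i.castSucc i.succ := by
  refine ⟨fun h i => h _ _ (by simp), fun h r s hs => ?_⟩
  convert h ⟨r, by omega⟩ <;> ext <;> simp [hs]

theorem monotone_iff_adjacent [Preorder α] {f : Fin n → α} :
    Monotone f ↔ ∀ r s : Fin n, (s : ℕ) = r + 1 → f r ≤ f s := by
  cases n with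
  | zero => exact iff_of_true (Subsingleton.monotone f) fun r => r.elim0
  | succ m => rw [Fin.monotone_iff_le_succ, forall_adjacent_iff]

theorem strictMono_iff_adjacent [Preorder α] {f : Fin n → α} :
    StrictMono f ↔ ∀ r s : Fin n, (s : ℕ) = r + 1 → f r < f s := by
  cases n with
  | zero => exact iff_of_true (Subsingleton.strictMono f) fun r => r.elim0
  | succ m => rw [Fin.strictMono_iff_lt_succ, forall_adjacent_iff]

theorem StrictMono.add_sub_le {g : Fin n → ℕ} (hg : StrictMono g) {k l : Fin n} (hkl : k ≤ l) :
    g k + (l - k) ≤ g l := by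
  have := card_le_card_of_injOn g (s := Icc k l) (t := Icc (g k) (g l))
    (fun i hi => by
      simp only [coe_Icc, Set.mem_Icc] at hi ⊢
      exact ⟨hg.monotone hi.1, hg.monotone hi.2⟩)
    hg.injective.injOn
  simp only [Fin.card_Icc, Nat.card_Icc] at this
  omega

theorem StrictMono.val_le_apply {g : Fin n → ℕ} (hg : StrictMono g) (k : Fin n) :
    (k : ℕ) ≤ g k := by
  have := hg.add_sub_le (show (⟨0, k.pos⟩ : Fin n) ≤ k from Nat.zero_le _)
  simp only [Nat.sub_zero] at this
  omega

theorem card_strictMono_fin [LinearOrder α] (n : ℕ) :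
    Nat.card {g : Fin n → α // StrictMono g} = (Nat.card α).choose n := by
  let e : {g : Fin n → α // StrictMono g} ≃ (Fin n ↪o α) :=
    { toFun := fun g => OrderEmbedding.ofStrictMono g.1 g.2
      invFun := fun e => ⟨e, e.strictMono⟩
      left_inv := fun _ => rfl
      right_inv := fun _ => rfl }
  rw [Nat.card_congr (e.trans Set.powersetCard.ofFinEmbEquiv), Set.powersetCard.card]

theorem card_range_succ_sdiff (S : Finset ℕ) (r : ℕ) :
    #(range (r + 1) \ S) = #(range r \ S) + if r ∈ S then 0 else 1 := by
  rw [range_add_one]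
  split_ifs with h
  · rw [insert_sdiff_of_mem _ h, add_zero]
  · rw [insert_sdiff_of_notMem _ h, card_insert_of_notMem (by simp)]

theorem card_range_sdiff_le (S : Finset ℕ) (k : ℕ) : #(range k \ S) ≤ k :=
  (card_le_card sdiff_subset).trans (card_range k).le

theorem card_range_sdiff_mono (S : Finset ℕ) {k l : ℕ} (hkl : k ≤ l) :
    #(range k \ S) ≤ #(range l \ S) :=
  card_le_card (sdiff_subset_sdiff (range_subset_range.2 hkl) le_rfl)

theorem card_range_sdiff_le_add (S : Finset ℕ) (k l : ℕ) :
    #(range l \ S) ≤ #(range k \ S) + (l - k) := by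
  calc #(range l \ S) ≤ #((range k \ S) ∪ Ico k l) := card_le_card fun r hr => by
        simp only [mem_union, mem_sdiff, mem_range, mem_Ico] at hr ⊢
        by_cases h : r < k
        · exact Or.inl ⟨h, hr.2⟩
        · exact Or.inr ⟨by omega, hr.1⟩
    _ ≤ #(range k \ S) + (l - k) := (card_union_le _ _).trans (by simp)

def MonotoneStrictAt [Preorder α] (S : Finset ℕ) (f : Fin n → α) : Prop :=
  Monotone f ∧ ∀ r s : Fin n, (s : ℕ) = r + 1 → (r : ℕ) ∈ S → f r < f s

theorem monotoneStrictAt_iff [Preorder α] {S : Finset ℕ} {f : Fin n → α} :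
    MonotoneStrictAt S f ↔
      ∀ r s : Fin n, (s : ℕ) = r + 1 → f r ≤ f s ∧ ((r : ℕ) ∈ S → f r < f s) := by
  simp only [MonotoneStrictAt, monotone_iff_adjacent, ← forall_and]

theorem strictMono_add_card_range_sdiff {S : Finset ℕ} {f : Fin n → ℕ}
    (hf : MonotoneStrictAt S f) : StrictMono fun k : Fin n => f k + #(range k \ S) := by
  refine strictMono_iff_adjacent.2 fun r s hs => ?_
  obtain ⟨hle, hlt⟩ := monotoneStrictAt_iff.1 hf r s hs
  simp only [hs, card_range_succ_sdiff]
  by_cases hr : (r : ℕ) ∈ S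
  · simp only [hr, if_true, forall_const] at hlt ⊢; omega
  · simp only [hr, if_false]; omega

theorem monotoneStrictAt_sub_card_range_sdiff (S : Finset ℕ) {g : Fin n → ℕ} (hg : StrictMono g) :
    MonotoneStrictAt S fun k : Fin n => g k - #(range k \ S) := by
  refine monotoneStrictAt_iff.2 fun r s hs => ?_
  have hlt : g r < g s := hg (by rw [Fin.lt_def]; omega)
  have hτ := card_range_sdiff_le S r
  have hr := hg.val_le_apply r
  simp only [hs, card_range_succ_sdiff]
  refine ⟨?_, fun hrS => ?_⟩
  · split_ifs <;> omega
  · rw [if_pos hrS]; omega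

theorem add_card_range_sdiff_lt {S : Finset ℕ} (hS : S ⊆ range (n - 1)) (k : Fin n) {v N : ℕ}
    (hv : v < N) : v + #(range k \ S) < N + n - 1 - #S := by
  have hτ := card_range_sdiff_mono S (show (k : ℕ) ≤ n - 1 by omega)
  have hS' := card_le_card hS
  rw [card_sdiff_of_subset hS, card_range] at hτ
  rw [card_range] at hS'
  have := k.pos
  omega

theorem sub_card_range_sdiff_lt {S : Finset ℕ} (hS : S ⊆ range (n - 1)) {N : ℕ} {g : Fin n → ℕ}
    (hg : StrictMono g) (hgN : ∀ k, g k < N + n - 1 - #S) (k : Fin n) :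
    g k - #(range k \ S) < N := by
  obtain ⟨last, hlast⟩ : ∃ last : Fin n, (last : ℕ) = n - 1 :=
    ⟨⟨n - 1, by have := k.pos; omega⟩, rfl⟩
  have hk := hg.add_sub_le (show k ≤ last by rw [Fin.le_def, hlast]; omega)
  have hτ := card_range_sdiff_le_add S k (n - 1)
  have hS' := card_le_card hS
  rw [card_sdiff_of_subset hS, card_range] at hτ
  rw [card_range] at hS'
  have := hgN last
  have := hg.val_le_apply k
  have := card_range_sdiff_le S k
  omega

def monotoneStrictAtEquiv (N : ℕ) {S : Finset ℕ} (hS : S ⊆ range (n - 1)) :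
    {f : Fin n → Fin N // MonotoneStrictAt S f} ≃
      {g : Fin n → Fin (N + n - 1 - #S) // StrictMono g} where
  toFun f := ⟨fun k => ⟨f.1 k + #(range k \ S), add_card_range_sdiff_lt hS k (f.1 k).isLt⟩,
    strictMono_add_card_range_sdiff (f := fun k => f.1 k) f.2⟩
  invFun g := ⟨fun k => ⟨g.1 k - #(range k \ S),
      sub_card_range_sdiff_lt hS (g := fun k => g.1 k) g.2 (fun k => (g.1 k).isLt) k⟩,
    monotoneStrictAt_sub_card_range_sdiff S (g := fun k => g.1 k) g.2⟩
  left_inv f := by ext k; simp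
  right_inv g := by
    ext k
    have := StrictMono.val_le_apply (g := fun k => g.1 k) g.2 k
    have := card_range_sdiff_le S k
    dsimp only at this ⊢
    omega

theorem monotoneStrictAt_orderIso_comp_iff [Preorder α] {β : Type*} [Preorder β] (e : α ≃o β)
    {S : Finset ℕ} {f : Fin n → α} : MonotoneStrictAt S (e ∘ f) ↔ MonotoneStrictAt S f := by
  simp [monotoneStrictAt_iff]

theorem card_monotoneStrictAt [LinearOrder α] [Fintype α] {S : Finset ℕ} (hS : S ⊆ range (n - 1)) :
    Nat.card {f : Fin n → α // MonotoneStrictAt S f} =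
      (Fintype.card α + n - 1 - #S).choose n := by
  let e := monoEquivOfFin α rfl
  let transport : {f : Fin n → α // MonotoneStrictAt S f} ≃
      {f : Fin n → Fin (Fintype.card α) // MonotoneStrictAt S f} :=
    (Equiv.arrowCongr (.refl _) e.symm.toEquiv).subtypeEquiv fun f =>
      (monotoneStrictAt_orderIso_comp_iff e.symm).symm
  rw [Nat.card_congr (transport.trans (monotoneStrictAtEquiv _ hS)), card_strictMono_fin,
    Nat.card_fin]

theorem card_monotone [LinearOrder α] [Fintype α] :
    Nat.card {f : Fin n → α // Monotone f} = (Fintype.card α + n - 1).choose n := by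
  simpa [MonotoneStrictAt] using card_monotoneStrictAt (α := α) (n := n) (S := ∅) (by simp)

end Counting

section Descents

variable {α : Type*} {n : ℕ}

def descentSet (w : Equiv.Perm (Fin n)) : Finset ℕ :=
  (univ.filter fun r : Fin n => ∃ s : Fin n, (s : ℕ) = r + 1 ∧ w s < w r).map Fin.valEmbedding

theorem card_descentSet (w : Equiv.Perm (Fin n)) : #(descentSet w) = des w := card_map _

theorem descentSet_subset (w : Equiv.Perm (Fin n)) : descentSet w ⊆ range (n - 1) := by
  intro r hr
  simp only [descentSet, mem_map, mem_filter, mem_univ, true_and, Fin.valEmbedding_apply] at hr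
  obtain ⟨r, ⟨s, hs, -⟩, rfl⟩ := hr
  rw [mem_range]
  omega

theorem mem_descentSet {w : Equiv.Perm (Fin n)} {r s : Fin n} (hs : (s : ℕ) = r + 1) :
    (r : ℕ) ∈ descentSet w ↔ w s < w r := by
  simp only [descentSet, mem_map, mem_filter, mem_univ, true_and, Fin.valEmbedding_apply]
  constructor
  · rintro ⟨r', ⟨s', hs', hlt⟩, hr'⟩
    obtain rfl : r' = r := Fin.ext hr'
    obtain rfl : s' = s := Fin.ext (by omega)
    exact hlt
  · exact fun h => ⟨r, ⟨s, hs, h⟩, rfl⟩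

theorem des_le (w : Equiv.Perm (Fin n)) : des w ≤ n - 1 := by
  simpa [card_descentSet] using card_le_card (descentSet_subset w)

/-- Encodes that `f` is monotone and increases strictly at every descent of `w`
(`isCompatible_iff`). -/
def IsCompatible [Preorder α] (w : Equiv.Perm (Fin n)) (f : Fin n → α) : Prop :=
  StrictMono fun k => toLex (f k, w k)

theorem IsCompatible.monotone [Preorder α] {w : Equiv.Perm (Fin n)} {f : Fin n → α}
    (hf : IsCompatible w f) : Monotone f := fun a b hab => by
  rcases Prod.Lex.toLex_le_toLex.1 (StrictMono.monotone hf hab) with h | h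
  · exact h.le
  · exact h.1.le

theorem isCompatible_iff [LinearOrder α] {w : Equiv.Perm (Fin n)} {f : Fin n → α} :
    IsCompatible w f ↔ MonotoneStrictAt (descentSet w) f := by
  rw [IsCompatible, strictMono_iff_adjacent, monotoneStrictAt_iff]
  refine forall₃_congr fun r s hs => ?_
  have hne : w r ≠ w s := w.injective.ne (Fin.ne_of_val_ne (by omega))
  rw [Prod.Lex.toLex_lt_toLex, mem_descentSet hs]
  rcases lt_or_gt_of_ne hne with h | h
  · simp [h, h.not_gt, le_iff_lt_or_eq]
  · simp only [h, h.not_gt, or_false, and_false, true_implies]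
    exact (and_iff_right_of_imp le_of_lt).symm

theorem card_isCompatible [LinearOrder α] [Fintype α] (w : Equiv.Perm (Fin n)) :
    Nat.card {f : Fin n → α // IsCompatible w f} = (Fintype.card α + n - 1 - des w).choose n := by
  rw [← card_descentSet, ← card_monotoneStrictAt (descentSet_subset w)]
  exact Nat.card_congr (Equiv.subtypeEquivRight fun f => isCompatible_iff)

end Descents

section Sorting

variable {α β : Type*} [LinearOrder α] [LinearOrder β] {n : ℕ}

theorem eq_sort_iff_isCompatible {b : Fin n → β} {σ : Equiv.Perm (Fin n)} :
    σ = Tuple.sort b ↔ IsCompatible σ (b ∘ σ) :=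
  Tuple.eq_sort_iff'

theorem isCompatible_sort (b : Fin n → β) : IsCompatible (Tuple.sort b) (b ∘ Tuple.sort b) :=
  eq_sort_iff_isCompatible.1 rfl

theorem isCompatible_inv_sort {a : Fin n → α} {b : Fin n → β}
    (hab : Monotone fun k => toLex (a k, b k)) : IsCompatible (Tuple.sort b)⁻¹ a := by
  intro k l hkl
  rw [Prod.Lex.toLex_lt_toLex]
  rcases Prod.Lex.toLex_le_toLex.1 (hab hkl.le) with ha | ⟨ha, hb⟩
  · exact Or.inl ha
  · refine Or.inr ⟨ha, (isCompatible_sort b).lt_iff_lt.1 ?_⟩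
    simp [Prod.Lex.toLex_lt_toLex, hb.lt_or_eq, hkl]

theorem monotone_of_isCompatible {w : Equiv.Perm (Fin n)} {f : Fin n → α} {g : Fin n → β}
    (hf : IsCompatible w⁻¹ f) (hg : IsCompatible w g) :
    Monotone fun k => toLex (f k, g (w⁻¹ k)) := fun k l hkl => by
  rw [Prod.Lex.toLex_le_toLex]
  rcases Prod.Lex.toLex_le_toLex.1 (StrictMono.monotone hf hkl) with h | ⟨h, hw⟩
  · exact Or.inl h
  · exact Or.inr ⟨h, hg.monotone hw⟩

def lexMonotoneEquivSigmaCompatible (n : ℕ) :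
    {ab : (Fin n → α) × (Fin n → β) // Monotone fun k => toLex (ab.1 k, ab.2 k)} ≃
      Σ w : Equiv.Perm (Fin n),
        {fg : (Fin n → α) × (Fin n → β) // IsCompatible w⁻¹ fg.1 ∧ IsCompatible w fg.2} where
  toFun ab := ⟨Tuple.sort ab.1.2, (ab.1.1, ab.1.2 ∘ Tuple.sort ab.1.2),
    isCompatible_inv_sort ab.2, isCompatible_sort ab.1.2⟩
  invFun t := ⟨(t.2.1.1, t.2.1.2 ∘ ⇑t.1⁻¹), monotone_of_isCompatible t.2.2.1 t.2.2.2⟩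
  left_inv ab := by ext k <;> simp
  right_inv := fun ⟨w, ⟨(f, g), hf, hg⟩⟩ => by
    have hw : Tuple.sort (g ∘ ⇑w.symm) = w :=
      (eq_sort_iff_isCompatible.2 (by simpa [Function.comp_assoc] using hg)).symm
    exact Sigma.subtype_ext hw (by ext k <;> simp [hw])

theorem sum_choose_mul_choose_des (x y : ℕ) :
    ∑ w : Equiv.Perm (Fin n), (x + n - 1 - des w⁻¹).choose n * (y + n - 1 - des w).choose n =
      (x * y + n - 1).choose n := by
  let lexPairs : {p : Fin n → Fin x ×ₗ Fin y // Monotone p} ≃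
      {ab : (Fin n → Fin x) × (Fin n → Fin y) // Monotone fun k => toLex (ab.1 k, ab.2 k)} :=
    ((Equiv.arrowCongr (.refl _) ofLex).trans (Equiv.arrowProdEquivProdArrow _ _ _)).subtypeEquiv
      fun _ => Iff.rfl
  calc ∑ w : Equiv.Perm (Fin n), (x + n - 1 - des w⁻¹).choose n * (y + n - 1 - des w).choose n
      = ∑ w : Equiv.Perm (Fin n), Nat.card {f : Fin n → Fin x // IsCompatible w⁻¹ f} *
          Nat.card {g : Fin n → Fin y // IsCompatible w g} := by
        simp only [card_isCompatible, Fintype.card_fin]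
    _ = Nat.card {p : Fin n → Fin x ×ₗ Fin y // Monotone p} := by
        rw [Nat.card_congr (lexPairs.trans (lexMonotoneEquivSigmaCompatible n)), Nat.card_sigma]
        simp only [Nat.card_congr Equiv.subtypeProdEquivProd, Nat.card_prod]
    _ = (x * y + n - 1).choose n := by
        rw [card_monotone, Fintype.card_lex, Fintype.card_prod, Fintype.card_fin, Fintype.card_fin]

end Sorting

section TwoSidedEulerian

variable {n : ℕ}

theorem twoSidedEulerianNum_eq_zero {i j : ℕ} (h : ¬(1 ≤ i ∧ i ≤ n ∧ 1 ≤ j ∧ j ≤ n)) :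
    twoSidedEulerianNum n i j = 0 :=
  if_neg h

theorem twoSidedEulerianNum_eq_card {i j : ℕ} (hi : i ≤ n) (hj : j ≤ n) :
    twoSidedEulerianNum n i j =
      #{w : Equiv.Perm (Fin n) | (des w⁻¹ + 1, des w + 1) = (i, j)} := by
  unfold twoSidedEulerianNum
  split_ifs with h
  · congr 1
    ext w
    simp only [mem_filter, mem_univ, true_and, Prod.mk.injEq]
    constructor <;> rintro ⟨h1, h2⟩ <;> omega
  · refine (card_eq_zero.2 (filter_eq_empty_iff.2 fun w _ => ?_)).symm
    simp only [Prod.mk.injEq]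
    omega

theorem sum_twoSidedEulerianNum_mul {R : Type*} [CommSemiring R] (hn : 1 ≤ n) (u v : ℕ → R) :
    ∑ i ∈ range (n + 1), ∑ j ∈ range (n + 1), (twoSidedEulerianNum n i j : R) * (u i * v j) =
      ∑ w : Equiv.Perm (Fin n), u (des w⁻¹ + 1) * v (des w + 1) := by
  have hdes : ∀ w ∈ (univ : Finset (Equiv.Perm (Fin n))),
      (des w⁻¹ + 1, des w + 1) ∈ range (n + 1) ×ˢ range (n + 1) := fun w _ => by
    have := des_le w
    have := des_le w⁻¹
    simp only [mem_product, mem_range]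
    omega
  rw [← sum_product' (f := fun i j => (twoSidedEulerianNum n i j : R) * (u i * v j)),
    ← sum_fiberwise_of_maps_to hdes]
  refine sum_congr rfl fun ⟨i, j⟩ hij => ?_
  simp only [mem_product, mem_range] at hij
  rw [twoSidedEulerianNum_eq_card (by omega) (by omega), sum_congr rfl fun w hw => by
    simp only [mem_filter, Prod.mk.injEq] at hw
    rw [hw.2.1, hw.2.2], sum_const, nsmul_eq_mul]

end TwoSidedEulerian

section Worpitzky

variable {R : Type*} [CommRing R]

def shiftComb (p q a : ℕ → R) (i : ℕ) : R := p i * a i + q i * a (i - 1)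

theorem sum_shiftComb_mul (p q a u : ℕ → R) (N : ℕ) (h0 : a 0 = 0) (hN : a (N + 1) = 0) :
    ∑ i ∈ range (N + 2), shiftComb p q a i * u i =
      ∑ i ∈ range (N + 1), a i * (p i * u i + q (i + 1) * u (i + 1)) := by
  simp only [shiftComb, add_mul, mul_add, sum_add_distrib]
  rw [sum_range_succ (fun i => p i * a i * u i), sum_range_succ' (fun i => q i * a (i - 1) * u i)]
  simp only [hN, h0, Nat.add_sub_cancel, Nat.zero_sub, mul_zero, zero_mul, add_zero]
  congr 1 <;> exact sum_congr rfl fun i _ => by ring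

theorem sum_sum_shiftComb_mul (p q p' q' u v : ℕ → R) (c : ℕ → ℕ → R) (N : ℕ)
    (hc : ∀ i j, ¬(1 ≤ i ∧ i ≤ N ∧ 1 ≤ j ∧ j ≤ N) → c i j = 0) :
    ∑ i ∈ range (N + 2), ∑ j ∈ range (N + 2),
        shiftComb p q (fun k => shiftComb p' q' (c k) j) i * (u i * v j) =
      ∑ i ∈ range (N + 1), ∑ j ∈ range (N + 1),
        c i j * ((p i * u i + q (i + 1) * u (i + 1)) * (p' j * v j + q' (j + 1) * v (j + 1))) := by
  have inner (i : ℕ) := sum_shiftComb_mul p' q' (c i) v N (hc _ _ (by omega)) (hc _ _ (by omega))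
  calc _ = ∑ i ∈ range (N + 2),
        shiftComb p q (fun k => ∑ j ∈ range (N + 2), shiftComb p' q' (c k) j * v j) i * u i := by
        refine sum_congr rfl fun i _ => ?_
        simp only [shiftComb, mul_sum, sum_mul, ← sum_add_distrib]
        exact sum_congr rfl fun j _ => by ring
    _ = _ := by
        rw [sum_shiftComb_mul]
        · simp only [inner, sum_mul]
          exact sum_congr rfl fun i _ => sum_congr rfl fun j _ => by ring
        · simp [inner, hc 0 _ (by omega)]
        · simp [inner, hc (N + 1) _ (by omega)]

def worpitzkyBasis (n i x : ℕ) : ℤ := ((x + n - i).choose n : ℕ)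

def worpitzkyTransform (n : ℕ) (c : ℕ → ℕ → ℤ) (x y : ℕ) : ℤ :=
  ∑ i ∈ range (n + 1), ∑ j ∈ range (n + 1), c i j * (worpitzkyBasis n i x * worpitzkyBasis n j y)

theorem worpitzkyTransform_const_mul (n : ℕ) (k : ℤ) (c : ℕ → ℕ → ℤ) (x y : ℕ) :
    worpitzkyTransform n (fun i j => k * c i j) x y = k * worpitzkyTransform n c x y := by
  simp only [worpitzkyTransform, mul_sum, mul_assoc]

def eulerianStep (n : ℕ) (c : ℕ → ℕ → ℤ) (i j : ℕ) : ℤ :=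
  ((i : ℤ) * j + n - 1) * c i j +
    (1 - (n : ℤ) + j * (n + 1 - i)) * c (i - 1) j +
    (1 - (n : ℤ) + i * (n + 1 - j)) * c i (j - 1) +
    ((n : ℤ) - 1 + (n + 1 - i) * (n + 1 - j)) * c (i - 1) (j - 1)

theorem worpitzkyBasis_sub_worpitzkyBasis_add_one {N i : ℕ} (hi : i ≤ N) (x : ℕ) :
    worpitzkyBasis (N + 1) i x - worpitzkyBasis (N + 1) (i + 1) x = worpitzkyBasis N i x := by
  obtain ⟨m, rfl⟩ : ∃ m, N = i + m := ⟨N - i, by omega⟩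
  have hpascal := congrArg (Nat.cast : ℕ → ℤ) (Nat.choose_succ_succ' (x + m) (i + m))
  simp only [worpitzkyBasis, show x + (i + m + 1) - i = x + m + 1 by omega,
    show x + (i + m + 1) - (i + 1) = x + m by omega, show x + (i + m) - i = x + m by omega]
  push_cast at hpascal ⊢
  linear_combination hpascal

theorem mul_worpitzkyBasis_add_mul_worpitzkyBasis_add_one {N i : ℕ} (hi : i ≤ N) (x : ℕ) :
    i * worpitzkyBasis (N + 1) i x + ((N : ℤ) + 1 - i) * worpitzkyBasis (N + 1) (i + 1) x =
      x * worpitzkyBasis N i x := by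
  obtain ⟨m, rfl⟩ : ∃ m, N = i + m := ⟨N - i, by omega⟩
  have hpascal := congrArg (Nat.cast : ℕ → ℤ) (Nat.choose_succ_succ' (x + m) (i + m))
  have habsorb := congrArg (Nat.cast : ℕ → ℤ) (Nat.add_one_mul_choose_eq (x + m) (i + m))
  simp only [worpitzkyBasis, show x + (i + m + 1) - i = x + m + 1 by omega,
    show x + (i + m + 1) - (i + 1) = x + m by omega, show x + (i + m) - i = x + m by omega]
  push_cast at hpascal habsorb ⊢
  linear_combination -habsorb - ((m : ℤ) + 1) * hpascal

theorem eulerianStep_succ (N : ℕ) (c : ℕ → ℕ → ℤ) (i j : ℕ) :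
    eulerianStep (N + 1) c i j =
      N * shiftComb 1 (-1) (fun k => shiftComb 1 (-1) (c k) j) i +
        shiftComb (fun k : ℕ => (k : ℤ)) (fun k : ℕ => (N : ℤ) + 2 - k)
          (fun k => shiftComb (fun l : ℕ => (l : ℤ)) (fun l : ℕ => (N : ℤ) + 2 - l) (c k) j) i := by
  simp only [eulerianStep, shiftComb, Pi.one_apply, Pi.neg_apply]
  push_cast
  ring

theorem worpitzkyTransform_eulerianStep (N : ℕ) (c : ℕ → ℕ → ℤ)
    (hc : ∀ i j, ¬(1 ≤ i ∧ i ≤ N ∧ 1 ≤ j ∧ j ≤ N) → c i j = 0) (x y : ℕ) :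
    worpitzkyTransform (N + 1) (eulerianStep (N + 1) c) x y =
      ((x : ℤ) * y + N) * worpitzkyTransform N c x y := by
  simp only [worpitzkyTransform, eulerianStep_succ, add_mul, sum_add_distrib, mul_assoc, ← mul_sum]
  rw [sum_sum_shiftComb_mul _ _ _ _ _ _ _ _ hc, sum_sum_shiftComb_mul _ _ _ _ _ _ _ _ hc]
  simp only [mul_sum, ← sum_add_distrib]
  refine sum_congr rfl fun i hi => sum_congr rfl fun j hj => ?_
  have hi' : i ≤ N := by rw [mem_range] at hi; omega
  have hj' : j ≤ N := by rw [mem_range] at hj; omega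
  have hΔx := worpitzkyBasis_sub_worpitzkyBasis_add_one hi' x
  have hΔy := worpitzkyBasis_sub_worpitzkyBasis_add_one hj' y
  have hMx := mul_worpitzkyBasis_add_mul_worpitzkyBasis_add_one hi' x
  have hMy := mul_worpitzkyBasis_add_mul_worpitzkyBasis_add_one hj' y
  simp only [Pi.one_apply, Pi.neg_apply]
  push_cast
  linear_combination
    N * c i j * ((worpitzkyBasis (N + 1) j y - worpitzkyBasis (N + 1) (j + 1) y) * hΔx +
      worpitzkyBasis N i x * hΔy) +
    c i j * ((j * worpitzkyBasis (N + 1) j y +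
      ((N : ℤ) + 1 - j) * worpitzkyBasis (N + 1) (j + 1) y) * hMx + x * worpitzkyBasis N i x * hMy)

theorem eq_zero_of_forall_sum_mul_worpitzkyBasis_eq_zero {n : ℕ} {a : ℕ → ℤ}
    (h : ∀ x, ∑ i ∈ range (n + 1), a i * worpitzkyBasis n i x = 0) {i : ℕ} (hi : i ≤ n) :
    a i = 0 := by
  induction i using Nat.strong_induction_on with
  | _ i ih =>
    have hx := h i
    rw [sum_eq_single_of_mem i (mem_range.2 (by omega)) fun k hk hki => ?_] at hx
    · simpa [worpitzkyBasis] using hx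
    · rw [mem_range] at hk
      rcases lt_or_gt_of_ne hki with hlt | hgt
      · rw [ih k hlt (by omega), zero_mul]
      · rw [worpitzkyBasis, Nat.choose_eq_zero_of_lt (by omega), Nat.cast_zero, mul_zero]

theorem eq_of_forall_worpitzkyTransform_eq {n : ℕ} {c d : ℕ → ℕ → ℤ}
    (h : ∀ x y, worpitzkyTransform n c x y = worpitzkyTransform n d x y) {i j : ℕ}
    (hi : i ≤ n) (hj : j ≤ n) : c i j = d i j := by
  have hrows (x : ℕ) {j : ℕ} (hj : j ≤ n) :
      ∑ i ∈ range (n + 1), (c i j - d i j) * worpitzkyBasis n i x = 0 := by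
    refine eq_zero_of_forall_sum_mul_worpitzkyBasis_eq_zero
      (a := fun j => ∑ i ∈ range (n + 1), (c i j - d i j) * worpitzkyBasis n i x) (fun y => ?_) hj
    rw [← sub_eq_zero.2 (h x y), worpitzkyTransform, worpitzkyTransform]
    simp only [← sum_sub_distrib, sum_mul]
    rw [sum_comm]
    exact sum_congr rfl fun i _ => sum_congr rfl fun j _ => by ring
  exact sub_eq_zero.1 (eq_zero_of_forall_sum_mul_worpitzkyBasis_eq_zero (fun x => hrows x hj) hi)

theorem worpitzkyTransform_twoSidedEulerianNum {n : ℕ} (hn : 1 ≤ n) (x y : ℕ) :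
    worpitzkyTransform n (fun i j => twoSidedEulerianNum n i j) x y = (x * y + n - 1).choose n := by
  rw [worpitzkyTransform, sum_twoSidedEulerianNum_mul hn, ← sum_choose_mul_choose_des]
  push_cast
  refine sum_congr rfl fun w _ => ?_
  rw [worpitzkyBasis, worpitzkyBasis, show x + n - (des w⁻¹ + 1) = x + n - 1 - des w⁻¹ by omega,
    show y + n - (des w + 1) = y + n - 1 - des w by omega]

end Worpitzky

theorem twoSidedEulerianNum_recurrence_general (n i j : ℕ) (hn : 2 ≤ n)
    (hi2 : i ≤ n) (hj2 : j ≤ n) :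
    (n : ℤ) * twoSidedEulerianNum n i j =
      ((i : ℤ) * j + n - 1) * twoSidedEulerianNum (n - 1) i j +
      (1 - (n : ℤ) + j * (n + 1 - i)) * twoSidedEulerianNum (n - 1) (i - 1) j +
      (1 - (n : ℤ) + i * (n + 1 - j)) * twoSidedEulerianNum (n - 1) i (j - 1) +
      ((n : ℤ) - 1 + (n + 1 - i) * (n + 1 - j)) *
        twoSidedEulerianNum (n - 1) (i - 1) (j - 1) := by
  refine eq_of_forall_worpitzkyTransform_eq (c := fun i j => (n : ℤ) * twoSidedEulerianNum n i j)
    (d := eulerianStep n fun i j => twoSidedEulerianNum (n - 1) i j) (fun x y => ?_) hi2 hj2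
  obtain ⟨m, rfl⟩ : ∃ m, n = m + 1 + 1 := ⟨n - 2, by omega⟩
  have hsupp (i j : ℕ) (h : ¬(1 ≤ i ∧ i ≤ m + 1 ∧ 1 ≤ j ∧ j ≤ m + 1)) :
      (twoSidedEulerianNum (m + 1) i j : ℤ) = 0 := by
    rw [twoSidedEulerianNum_eq_zero h, Nat.cast_zero]
  have hchoose := congrArg (Nat.cast : ℕ → ℤ) (Nat.add_one_mul_choose_eq (x * y + m) (m + 1))
  simp only [Nat.add_sub_cancel]
  rw [worpitzkyTransform_const_mul, worpitzkyTransform_eulerianStep _ _ hsupp,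
    worpitzkyTransform_twoSidedEulerianNum (by omega),
    worpitzkyTransform_twoSidedEulerianNum (by omega),
    show x * y + (m + 1 + 1) - 1 = x * y + m + 1 by omega,
    show x * y + (m + 1) - 1 = x * y + m by omega]
  push_cast at hchoose ⊢
  linear_combination -hchoose

/-- The four-term recurrence for the two-sided Eulerian numbers:
`n A_{n,i,j} = (ij+n-1) A_{n-1,i,j} + (1-n+j(n+1-i)) A_{n-1,i-1,j}
  + (1-n+i(n+1-j)) A_{n-1,i,j-1} + (n-1+(n+1-i)(n+1-j)) A_{n-1,i-1,j-1}`. -/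
theorem twoSidedEulerianNum_recurrence (n i j : ℕ) (hn : 2 ≤ n)
    (hi1 : 1 ≤ i) (hi2 : i ≤ n) (hj1 : 1 ≤ j) (hj2 : j ≤ n) :
    (n : ℤ) * twoSidedEulerianNum n i j =
      ((i : ℤ) * j + n - 1) * twoSidedEulerianNum (n - 1) i j +
      (1 - (n : ℤ) + j * (n + 1 - i)) * twoSidedEulerianNum (n - 1) (i - 1) j +
      (1 - (n : ℤ) + i * (n + 1 - j)) * twoSidedEulerianNum (n - 1) i (j - 1) +
      ((n : ℤ) - 1 + (n + 1 - i) * (n + 1 - j)) *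
        twoSidedEulerianNum (n - 1) (i - 1) (j - 1) :=
  twoSidedEulerianNum_recurrence_general n i j hn hi2 hj2
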